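/- If two shortest paths P₁ and P₂ in a positively-weighted graph agree (they have a common first intersection vertex v and |P₁ ∩ P₂| ≥ 2), then they also have a common last intersection vertex w with w ≠ v: the vertex w ∈ P₁ ∩ P₂ maximizing dist(v,w) is the last vertex of both paths lying in P₁ ∩ P₂. -/

import Mathlib

/-! Along a shortest path that starts at `v`, the distance from `v` strictly increases: every
subpath of a shortest path is shortest, and edge weights are positive. Since `v` is the first
common vertex of both paths, each path contains all of `P₁ ∩ P₂` after `v`, so on each path the
last vertex of `P₁ ∩ P₂` is the unique maximiser of `dist v` on `P₁ ∩ P₂`. Hence the two last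
vertices coincide, and they differ from `v` because a second common vertex lies strictly after
`v`. -/

/-- A graph with real edge weights that are strictly positive on edges. -/
structure WeightedGraph (V : Type*) where
  Adj : V → V → Prop
  w : V → V → ℝ
  pos : ∀ {u v : V}, Adj u v → 0 < w u v

namespace WeightedGraph

variable {V : Type*} (G : WeightedGraph V)

/-- The graph is undirected: adjacency and weights are symmetric. -/
def IsUndirected : Prop :=
  (∀ u v, G.Adj u v → G.Adj v u) ∧ (∀ u v, G.w u v = G.w v u)

/-- Total weight of a vertex sequence (sum of weights of consecutive pairs). -/
def weight (l : List V) : ℝ :=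
  ((l.zip l.tail).map fun p => G.w p.1 p.2).sum

/-- A (simple) path: a nonempty sequence of distinct vertices with consecutive
vertices adjacent. -/
def IsPath (l : List V) : Prop :=
  l ≠ [] ∧ l.Chain' G.Adj ∧ l.Nodup

/-- A path beginning at `u` and ending at `v`. -/
def IsPathFrom (l : List V) (u v : V) : Prop :=
  G.IsPath l ∧ l.head? = some u ∧ l.getLast? = some v

/-- A shortest path between its endpoints: a path whose total weight is at most
that of any path with the same endpoints. -/
def IsShortest (l : List V) : Prop :=
  G.IsPath l ∧ ∀ l', G.IsPath l' → l'.head? = l.head? → l'.getLast? = l.getLast? →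
    G.weight l ≤ G.weight l'

/-- Weighted graph distance from `u` to `v`. -/
noncomputable def dist (u v : V) : ℝ :=
  sInf {c : ℝ | ∃ l, G.IsPathFrom l u v ∧ G.weight l = c}

end WeightedGraph

/-- `v` is the first vertex of `P` lying in the set `S`. -/
def FirstIn {V : Type*} (P : List V) (S : Set V) (v : V) : Prop :=
  v ∈ S ∧ ∃ pre post : List V, P = pre ++ v :: post ∧ ∀ x ∈ pre, x ∉ S

/-- `v` is the last vertex of `P` lying in the set `S`. -/
def LastIn {V : Type*} (P : List V) (S : Set V) (v : V) : Prop :=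
  v ∈ S ∧ ∃ pre post : List V, P = pre ++ v :: post ∧ ∀ x ∈ post, x ∉ S

theorem List.exists_eq_append_cons_append_cons_of_not_nodup {α : Type*} {l : List α}
    (h : ¬ l.Nodup) : ∃ xs a ys zs, l = xs ++ (a :: ys ++ [a]) ++ zs := by
  obtain ⟨a, ha⟩ : ∃ a, List.Sublist [a, a] l := by simpa [List.nodup_iff_sublist] using h
  obtain ⟨r₁, r₂, rfl, ha₁, ha₂⟩ := List.cons_sublist_iff.1 ha
  obtain ⟨xs, ys, rfl⟩ := List.append_of_mem ha₁
  obtain ⟨ys', zs, rfl⟩ := List.append_of_mem (List.singleton_sublist.1 ha₂)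
  exact ⟨xs, a, ys ++ ys', zs, by simp⟩

theorem List.head?_append_append_congr {α : Type*} {A B C Q : List α}
    (h : Q.head? = C.head?) : (A ++ Q ++ B).head? = (A ++ C ++ B).head? := by
  simp only [List.head?_append, h]

theorem List.getLast?_append_append_congr {α : Type*} {A B C Q : List α}
    (h : Q.getLast? = C.getLast?) : (A ++ Q ++ B).getLast? = (A ++ C ++ B).getLast? := by
  simp only [List.getLast?_append, h]

theorem List.IsChain.append_append_of_head?_getLast? {α : Type*} {R : α → α → Prop}
    {A B C Q : List α} (h : (A ++ C ++ B).IsChain R) (hQ : Q.IsChain R)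
    (hh : Q.head? = C.head?) (hl : Q.getLast? = C.getLast?) : (A ++ Q ++ B).IsChain R := by
  rw [List.append_assoc, List.isChain_append] at h ⊢
  obtain ⟨hA, hCB, hACB⟩ := h
  obtain ⟨-, hB, hCB⟩ := List.isChain_append.1 hCB
  refine ⟨hA, List.isChain_append.2 ⟨hQ, hB, fun x hx => hCB x (hl ▸ hx)⟩, fun x hx y hy => ?_⟩
  exact hACB x hx y (by simpa only [List.head?_append, hh] using hy)

namespace WeightedGraph

variable {V : Type*} (G : WeightedGraph V)

@[simp] theorem weight_singleton (a : V) : G.weight [a] = 0 := rfl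

@[simp] theorem weight_cons_cons (a b : V) (l : List V) :
    G.weight (a :: b :: l) = G.w a b + G.weight (b :: l) := rfl

theorem weight_append_cons (l₁ l₂ : List V) (a : V) :
    G.weight (l₁ ++ a :: l₂) = G.weight (l₁ ++ [a]) + G.weight (a :: l₂) := by
  induction l₁ with
  | nil => simp
  | cons x xs ih =>
    cases xs with
    | nil => simp
    | cons y ys =>
      simp only [List.cons_append, weight_cons_cons] at ih ⊢
      rw [ih]; ring

theorem weight_append_append {A B Q : List V} {c d : V} (hc : Q.head? = some c)
    (hd : Q.getLast? = some d) :
    G.weight (A ++ Q ++ B) = G.weight (A ++ [c]) + G.weight Q + G.weight (d :: B) := by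
  obtain ⟨Q₁, rfl⟩ := List.head?_eq_some_iff.1 hc
  obtain ⟨Q₀, hQ₀⟩ := List.getLast?_eq_some_iff.1 hd
  calc G.weight (A ++ c :: Q₁ ++ B) = G.weight (A ++ Q₀ ++ d :: B) := by
        rw [List.append_assoc A, hQ₀]; simp
    _ = G.weight (A ++ c :: Q₁) + G.weight (d :: B) := by
        rw [weight_append_cons, List.append_assoc, ← hQ₀]
    _ = _ := by rw [weight_append_cons]

theorem weight_nonneg {l : List V} (h : l.IsChain G.Adj) : 0 ≤ G.weight l := by
  induction h with
  | nil => exact le_rfl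
  | singleton => simp
  | cons_cons hab _ ih => rw [weight_cons_cons]; linarith [G.pos hab]

theorem weight_pos {l : List V} (h : l.IsChain G.Adj) (hl : 1 < l.length) : 0 < G.weight l := by
  match l, h with
  | a :: b :: l, h =>
    rw [List.isChain_cons_cons] at h
    rw [weight_cons_cons]; linarith [G.pos h.1, G.weight_nonneg h.2]

theorem exists_isPath_weight_le {l : List V} (hne : l ≠ []) (hl : l.IsChain G.Adj) :
    ∃ p, G.IsPath p ∧ p.head? = l.head? ∧ p.getLast? = l.getLast? ∧ G.weight p ≤ G.weight l := by
  induction hn : l.length using Nat.strong_induction_on generalizing l with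
  | _ n ih =>
  by_cases hnd : l.Nodup
  · exact ⟨l, ⟨hne, hl, hnd⟩, rfl, rfl, le_rfl⟩
  -- cut out the closed walk `a :: ys ++ [a]`, whose weight is nonnegative
  obtain ⟨xs, a, ys, zs, rfl⟩ := List.exists_eq_append_cons_append_cons_of_not_nodup hnd
  have hcycle : (a :: ys ++ [a]).IsChain G.Adj := hl.infix ⟨xs, zs, rfl⟩
  have hh : [a].head? = (a :: ys ++ [a]).head? := rfl
  have hl' : [a].getLast? = (a :: ys ++ [a]).getLast? := (List.getLast?_concat ..).symm
  obtain ⟨p, hp, hph, hpl, hpw⟩ := ih _ (by simp [← hn]) (by simp)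
    (hl.append_append_of_head?_getLast? (List.isChain_singleton a) hh hl') rfl
  refine ⟨p, hp, hph.trans (List.head?_append_append_congr hh),
    hpl.trans (List.getLast?_append_append_congr hl'), ?_⟩
  rw [G.weight_append_append (d := a) rfl rfl] at hpw
  rw [G.weight_append_append rfl (List.getLast?_concat ..)]
  linarith [G.weight_nonneg hcycle, G.weight_singleton a]

variable {G}

theorem IsShortest.weight_le {P A B C Q : List V} (hP : G.IsShortest P)
    (hPeq : P = A ++ C ++ B) (hQ : Q ≠ []) (hQc : Q.IsChain G.Adj) (hh : Q.head? = C.head?)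
    (hl : Q.getLast? = C.getLast?) :
    G.weight C ≤ G.weight Q := by
  obtain ⟨c, hc⟩ := Option.ne_none_iff_exists'.1 (mt List.head?_eq_none_iff.1 hQ)
  obtain ⟨d, hd⟩ := Option.ne_none_iff_exists'.1 (mt List.getLast?_eq_none_iff.1 hQ)
  -- splicing `Q` into `P` in place of `C` gives a walk between the endpoints of `P`
  have hspliced := (hPeq ▸ hP.1.2.1).append_append_of_head?_getLast? hQc hh hl
  obtain ⟨p, hp, hph, hpl, hpw⟩ := G.exists_isPath_weight_le (by simp [hQ]) hspliced
  have hPp := hP.2 p hp (by rw [hph, hPeq, List.head?_append_append_congr hh])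
    (by rw [hpl, hPeq, List.getLast?_append_append_congr hl])
  rw [hPeq, G.weight_append_append (hh ▸ hc) (hl ▸ hd)] at hPp
  rw [G.weight_append_append hc hd] at hpw
  linarith

theorem IsShortest.dist_eq_weight {P A B C : List V} {a b : V} (hP : G.IsShortest P)
    (hPeq : P = A ++ C ++ B) (ha : C.head? = some a) (hb : C.getLast? = some b) :
    G.dist a b = G.weight C := by
  have hCP : C <:+: P := ⟨A, B, hPeq.symm⟩
  refine IsLeast.csInf_eq
    ⟨⟨C, ⟨⟨?_, hP.1.2.1.infix hCP, hP.1.2.2.sublist hCP.sublist⟩, ha, hb⟩, rfl⟩, ?_⟩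
  · rintro rfl; simp at ha
  · rintro _ ⟨Q, ⟨⟨hQ, hQc, -⟩, hQa, hQb⟩, rfl⟩
    exact hP.weight_le hPeq hQ hQc (hQa.trans ha.symm) (hQb.trans hb.symm)

theorem IsShortest.pairwise_dist_lt {P pre post : List V} {v : V} (hP : G.IsShortest P)
    (hPeq : P = pre ++ v :: post) :
    (v :: post).Pairwise (fun x y => G.dist v x < G.dist v y) := by
  refine List.pairwise_iff_forall_sublist.2 fun {x y} hxy => ?_
  obtain ⟨r₁, r₂, hr, hx, hy⟩ := List.cons_sublist_iff.1 hxy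
  obtain ⟨A, B, rfl⟩ := List.append_of_mem hx
  obtain ⟨C, D, rfl⟩ := List.append_of_mem (List.singleton_sublist.1 hy)
  have hvA : (A ++ [x]).head? = some v := by
    simpa [List.head?_append] using (congrArg List.head? hr).symm
  have hdx : G.dist v x = G.weight (A ++ [x]) :=
    hP.dist_eq_weight (A := pre) (B := B ++ C ++ y :: D) (by rw [hPeq, hr]; simp) hvA
      (List.getLast?_concat ..)
  have hdy : G.dist v y = G.weight (A ++ x :: (B ++ C ++ [y])) :=
    hP.dist_eq_weight (A := pre) (B := D) (by rw [hPeq, hr]; simp)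
      (by simpa [List.head?_append] using hvA) (by simp [List.getLast?_cons])
  have hxy : 0 < G.weight (x :: (B ++ C ++ [y])) :=
    G.weight_pos (hP.1.2.1.infix ⟨pre ++ A, D, by rw [hPeq, hr]; simp⟩) (by simp)
  rw [hdx, hdy, G.weight_append_cons A (B ++ C ++ [y]) x]
  linarith

end WeightedGraph

theorem LastIn.append_left {α : Type*} {L : List α} {S : Set α} {w : α} (pre : List α)
    (h : LastIn L S w) : LastIn (pre ++ L) S w := by
  obtain ⟨hw, A, B, rfl, hB⟩ := h
  exact ⟨hw, pre ++ A, B, by simp, hB⟩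

theorem exists_lastIn {α : Type*} {L : List α} {S : Set α} (h : ∃ x ∈ L, x ∈ S) :
    ∃ w, LastIn L S w := by
  induction L with
  | nil => simp at h
  | cons a t ih =>
    by_cases ht : ∃ x ∈ t, x ∈ S
    · obtain ⟨w, hw⟩ := ih ht
      exact ⟨w, hw.append_left [a]⟩
    · push Not at ht
      obtain ⟨x, hx, hxS⟩ := h
      obtain rfl : x = a := (List.mem_cons.1 hx).resolve_right (ht x · hxS)
      exact ⟨x, hxS, [], t, rfl, ht⟩

theorem LastIn.rel_of_pairwise {α : Type*} {R : α → α → Prop} {L : List α} {S : Set α} {w x : α}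
    (h : LastIn L S w) (hR : L.Pairwise R) (hx : x ∈ L) (hxS : x ∈ S) (hxw : x ≠ w) : R x w := by
  obtain ⟨-, A, B, rfl, hB⟩ := h
  obtain hxA | rfl | hxB : x ∈ A ∨ x = w ∨ x ∈ B := by simpa using hx
  · exact hR.rel_of_mem_append hxA List.mem_cons_self
  · exact absurd rfl hxw
  · exact absurd hxS (hB x hxB)

/-- If two shortest paths `P₁` and `P₂` agree (common first intersection vertex `v`
and `|P₁ ∩ P₂| ≥ 2`), then they have a common last intersection vertex `w ≠ v`;
namely, the vertex `w ∈ P₁ ∩ P₂` maximizing `dist v w` is the last vertex of both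
paths lying in `P₁ ∩ P₂`. -/
theorem common_final_intersection {V : Type*} (G : WeightedGraph V)
    (P₁ P₂ : List V) (h₁ : G.IsShortest P₁) (h₂ : G.IsShortest P₂)
    (S : Set V) (hS : S = {x | x ∈ P₁ ∧ x ∈ P₂})
    (v : V) (hv₁ : FirstIn P₁ S v) (hv₂ : FirstIn P₂ S v)
    (hcard : 2 ≤ S.ncard) :
    ∃ w, w ≠ v ∧ LastIn P₁ S w ∧ LastIn P₂ S w ∧
      ∀ x ∈ S, G.dist v x ≤ G.dist v w := by
  obtain ⟨hvS, pre₁, post₁, rfl, hpre₁⟩ := hv₁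
  obtain ⟨-, pre₂, post₂, rfl, hpre₂⟩ := hv₂
  have hS₁ : ∀ x ∈ S, x ∈ v :: post₁ := fun x hx =>
    (List.mem_append.1 (hS ▸ hx).1).resolve_left (hpre₁ x · hx)
  have hS₂ : ∀ x ∈ S, x ∈ v :: post₂ := fun x hx =>
    (List.mem_append.1 (hS ▸ hx).2).resolve_left (hpre₂ x · hx)
  have mono₁ := h₁.pairwise_dist_lt rfl
  obtain ⟨w₁, hw₁⟩ := exists_lastIn ⟨v, List.mem_cons_self, hvS⟩ (L := v :: post₁)
  obtain ⟨w₂, hw₂⟩ := exists_lastIn ⟨v, List.mem_cons_self, hvS⟩ (L := v :: post₂)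
  have max₁ : ∀ x ∈ S, x ≠ w₁ → G.dist v x < G.dist v w₁ := fun x hx =>
    hw₁.rel_of_pairwise mono₁ (hS₁ x hx) hx
  have max₂ : ∀ x ∈ S, x ≠ w₂ → G.dist v x < G.dist v w₂ := fun x hx =>
    hw₂.rel_of_pairwise (h₂.pairwise_dist_lt rfl) (hS₂ x hx) hx
  obtain rfl : w₁ = w₂ := by
    by_contra hne
    linarith [max₁ w₂ hw₂.1 (Ne.symm hne), max₂ w₁ hw₁.1 hne]
  obtain ⟨u, huS, huv⟩ := Set.exists_ne_of_one_lt_ncard hcard v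
  refine ⟨w₁, ?_, hw₁.append_left pre₁, hw₂.append_left pre₂, fun x hx => ?_⟩
  · rintro rfl
    have hu : u ∈ post₁ := (List.mem_cons.1 (hS₁ u huS)).resolve_left huv
    linarith [List.rel_of_pairwise_cons mono₁ hu, max₁ u huS huv]
  · rcases eq_or_ne x w₁ with rfl | hxw
    exacts [le_rfl, (max₁ x hx hxw).le]
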